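/- Existence of an optimal tree coupling: for a finite rooted tree with vertex weights w and all z, z′ ∈ K_T, there exists a coupling ζ of l(z) and l(z′) with Σ_{a, b ∈ L} ζ(a, b) · d_T(a, b) = Σ_{v ∈ V} w_v · |z_v − z′_v|. Consequently, the infimum over all couplings ζ of l(z) and l(z′) of Σ_{a, b} ζ(a, b) · d_T(a, b) equals Σ_{v ∈ V} w_v · |z_v − z′_v| (the Wasserstein-1 distance in the tree metric equals the weighted ℓ1 distance on K_T). -/

import Mathlib

/-!
A coupling moves at least `|z v - z' v|` units of mass into or out of the leaves below `v`, and
each such unit pays `w v` in the tree distance; this gives the lower bound.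

For the upper bound the coupling is built from the leaves up. At a vertex `v`, the couplings
built below the children are placed side by side; what they leave unmatched is an excess of `z`
on some children and of `z'` on others, and a product plan matches as much of it as possible,
leaving `|z v - z' v|` unmatched. A unit of mass thus crosses the edge above `u` only as part of
the unmatched mass at `u`, so the total cost is `∑ u, w u * |z u - z' u|`.
-/

open Classical Finset

/-- The children of a vertex `u` in a rooted tree with root `r` and parent map `par`. -/
noncomputable def children {V : Type*} [Fintype V] (r : V) (par : V → V) (u : V) : Finset V :=
  Finset.univ.filter (fun v => v ≠ r ∧ par v = u)

/-- A vertex is a leaf if it has no children. -/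
def IsLeaf {V : Type*} [Fintype V] (r : V) (par : V → V) (v : V) : Prop :=
  children r par v = ∅

/-- The set of leaves of the tree. -/
noncomputable def leaves {V : Type*} [Fintype V] (r : V) (par : V → V) : Finset V :=
  Finset.univ.filter (fun v => IsLeaf r par v)

/-- The leaves below a vertex `v`: leaves `l` with `par^[n] l = v` for some `n ≥ 0`. -/
noncomputable def leavesBelow {V : Type*} [Fintype V] (r : V) (par : V → V) (v : V) :
    Finset V :=
  (leaves r par).filter (fun l => ∃ n : ℕ, par^[n] l = v)

/-- The tree distance between leaves `a, b`:
`d_T(a,b) = Σ_v w_v · |1[a ∈ L(v)] − 1[b ∈ L(v)]|`. -/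
noncomputable def treeDist {V : Type*} [Fintype V] (r : V) (par : V → V) (w : V → ℝ)
    (a b : V) : ℝ :=
  ∑ v : V, w v * |(if a ∈ leavesBelow r par v then (1 : ℝ) else 0)
    - (if b ∈ leavesBelow r par v then (1 : ℝ) else 0)|

structure IsSubCoupling {ι : Type*} (s : Finset ι) (p q : ι → ℝ) (ζ : ι → ι → ℝ)
    (ℓ φ : ι → ℝ) : Prop where
  nonneg : ∀ a b, 0 ≤ ζ a b
  rowDefect_nonneg : ∀ a, 0 ≤ ℓ a
  colDefect_nonneg : ∀ b, 0 ≤ φ b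
  row_sum : ∀ a ∈ s, ∑ b ∈ s, ζ a b + ℓ a = p a
  col_sum : ∀ b ∈ s, ∑ a ∈ s, ζ a b + φ b = q b

namespace IsSubCoupling

variable {ι : Type*} {s : Finset ι} {p q : ι → ℝ} {ζ : ι → ι → ℝ} {ℓ φ : ι → ℝ}

theorem sum_rowDefect_sub_sum_colDefect (h : IsSubCoupling s p q ζ ℓ φ) :
    ∑ a ∈ s, ℓ a - ∑ b ∈ s, φ b = ∑ a ∈ s, p a - ∑ b ∈ s, q b := by
  have hp : ∑ a ∈ s, p a = ∑ a ∈ s, ∑ b ∈ s, ζ a b + ∑ a ∈ s, ℓ a := by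
    rw [← sum_add_distrib]; exact sum_congr rfl fun a ha => (h.row_sum a ha).symm
  have hq : ∑ b ∈ s, q b = ∑ b ∈ s, ∑ a ∈ s, ζ a b + ∑ b ∈ s, φ b := by
    rw [← sum_add_distrib]; exact sum_congr rfl fun b hb => (h.col_sum b hb).symm
  rw [hp, hq, sum_comm (f := ζ)]
  ring

theorem add {γ : ι → ι → ℝ} {ℓ' φ' : ι → ℝ} (h : IsSubCoupling s p q ζ ℓ φ)
    (hγ : IsSubCoupling s ℓ φ γ ℓ' φ') : IsSubCoupling s p q (ζ + γ) ℓ' φ' where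
  nonneg a b := add_nonneg (h.nonneg a b) (hγ.nonneg a b)
  rowDefect_nonneg := hγ.rowDefect_nonneg
  colDefect_nonneg := hγ.colDefect_nonneg
  row_sum a ha := by
    simp only [Pi.add_apply, sum_add_distrib, add_assoc, hγ.row_sum a ha, h.row_sum a ha]
  col_sum b hb := by
    simp only [Pi.add_apply, sum_add_distrib, add_assoc, hγ.col_sum b hb, h.col_sum b hb]

theorem cost_add_defect_le (h : IsSubCoupling s p q ζ ℓ φ) {d : ι → ι → ℝ} {f : ι → ℝ}
    (hd : ∀ a ∈ s, ∀ b ∈ s, d a b ≤ f a + f b) :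
    ∑ a ∈ s, ∑ b ∈ s, ζ a b * d a b + ∑ a ∈ s, ℓ a * f a + ∑ b ∈ s, φ b * f b
      ≤ ∑ a ∈ s, p a * f a + ∑ b ∈ s, q b * f b := by
  have hcost : ∑ a ∈ s, ∑ b ∈ s, ζ a b * d a b ≤ ∑ a ∈ s, ∑ b ∈ s, ζ a b * (f a + f b) :=
    sum_le_sum fun a ha => sum_le_sum fun b hb =>
      mul_le_mul_of_nonneg_left (hd a ha b hb) (h.nonneg a b)
  have hrow : ∑ a ∈ s, p a * f a = ∑ a ∈ s, (∑ b ∈ s, ζ a b * f a + ℓ a * f a) :=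
    sum_congr rfl fun a ha => by rw [← h.row_sum a ha, add_mul, sum_mul]
  have hcol : ∑ b ∈ s, q b * f b = ∑ b ∈ s, (∑ a ∈ s, ζ a b * f b + φ b * f b) :=
    sum_congr rfl fun b hb => by rw [← h.col_sum b hb, add_mul, sum_mul]
  have hsplit : ∑ a ∈ s, ∑ b ∈ s, ζ a b * (f a + f b)
      = ∑ a ∈ s, ∑ b ∈ s, ζ a b * f a + ∑ b ∈ s, ∑ a ∈ s, ζ a b * f b := by
    simp only [mul_add, sum_add_distrib]
    rw [sum_comm (f := fun a b => ζ a b * f b)]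
  rw [hrow, hcol, sum_add_distrib, sum_add_distrib]
  linarith

end IsSubCoupling

theorem exists_isSubCoupling_sum_defect_eq_abs {ι : Type*} (s : Finset ι) {p q : ι → ℝ}
    (hp : ∀ a, 0 ≤ p a) (hq : ∀ b, 0 ≤ q b) :
    ∃ (ζ : ι → ι → ℝ) (ℓ φ : ι → ℝ), IsSubCoupling s p q ζ ℓ φ ∧
      ∑ a ∈ s, ℓ a + ∑ b ∈ s, φ b = |∑ a ∈ s, p a - ∑ b ∈ s, q b| := by
  set P := ∑ a ∈ s, p a
  set Q := ∑ b ∈ s, q b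
  set M := max P Q
  have hP : 0 ≤ P := sum_nonneg fun a _ => hp a
  have hQ : 0 ≤ Q := sum_nonneg fun b _ => hq b
  have hM : 0 ≤ M := hP.trans (le_max_left P Q)
  have hPM : 0 ≤ 1 - P / M := sub_nonneg.mpr (div_le_one_of_le₀ (le_max_left P Q) hM)
  have hQM : 0 ≤ 1 - Q / M := sub_nonneg.mpr (div_le_one_of_le₀ (le_max_right P Q) hM)
  refine ⟨fun a b => p a * q b / M, fun a => p a * (1 - Q / M), fun b => q b * (1 - P / M),
    ⟨fun a b => div_nonneg (mul_nonneg (hp a) (hq b)) hM, fun a => mul_nonneg (hp a) hQM,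
      fun b => mul_nonneg (hq b) hPM,
      fun a _ => ?_, fun b _ => ?_⟩, ?_⟩
  · rw [← sum_div, ← mul_sum]; ring
  · rw [← sum_div, ← sum_mul]; ring
  · rw [← sum_mul, ← sum_mul]
    change P * (1 - Q / M) + Q * (1 - P / M) = |P - Q|
    rcases eq_or_lt_of_le hM with hM0 | hMpos
    · have hP0 : P = 0 := le_antisymm (hM0 ▸ le_max_left P Q) hP
      have hQ0 : Q = 0 := le_antisymm (hM0 ▸ le_max_right P Q) hQ
      simp [hP0, hQ0]
    · rcases le_total P Q with hPQ | hQP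
      · have hMQ : M = Q := max_eq_right hPQ
        rw [hMQ] at hMpos ⊢
        rw [abs_of_nonpos (by linarith)]
        field_simp; ring
      · have hMP : M = P := max_eq_left hQP
        rw [hMP] at hMpos ⊢
        rw [abs_of_nonneg (by linarith)]
        field_simp; ring

section Blocks

variable {ι κ : Type*} {C : Finset κ} {S : κ → Finset ι}

theorem sum_ite_mem_eq_of_pairwiseDisjoint {M : Type*} [AddCommMonoid M]
    (hS : (C : Set κ).PairwiseDisjoint S) {c₀ : κ} (hc₀ : c₀ ∈ C) {a : ι} (ha : a ∈ S c₀)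
    (g : κ → M) :
    ∑ c ∈ C, (if a ∈ S c then g c else 0) = g c₀ := by
  rw [sum_eq_single_of_mem c₀ hc₀ fun c hc hne => if_neg fun hac =>
    Finset.disjoint_left.mp (hS hc hc₀ hne) hac ha, if_pos ha]

theorem sum_biUnion_ite_mem {M : Type*} [AddCommMonoid M] {c : κ} (hc : c ∈ C) (f : ι → M) :
    ∑ a ∈ C.biUnion S, (if a ∈ S c then f a else 0) = ∑ a ∈ S c, f a := by
  rw [sum_ite_mem, inter_eq_right.mpr (subset_biUnion_of_mem S hc)]

noncomputable def blockPlan (C : Finset κ) (S : κ → Finset ι) (ζ : κ → ι → ι → ℝ)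
    (a b : ι) : ℝ :=
  ∑ c ∈ C, if a ∈ S c ∧ b ∈ S c then ζ c a b else 0

noncomputable def blockDefect (C : Finset κ) (S : κ → Finset ι) (ℓ : κ → ι → ℝ) (a : ι) : ℝ :=
  ∑ c ∈ C, if a ∈ S c then ℓ c a else 0

theorem blockDefect_of_mem (hS : (C : Set κ).PairwiseDisjoint S) {c₀ : κ} (hc₀ : c₀ ∈ C)
    {a : ι} (ha : a ∈ S c₀) (ℓ : κ → ι → ℝ) : blockDefect C S ℓ a = ℓ c₀ a :=
  sum_ite_mem_eq_of_pairwiseDisjoint hS hc₀ ha _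

theorem sum_blockPlan_mul_of_mem_left (hS : (C : Set κ).PairwiseDisjoint S) {c₀ : κ}
    (hc₀ : c₀ ∈ C) {a : ι} (ha : a ∈ S c₀) (ζ : κ → ι → ι → ℝ) (f : ι → ℝ) :
    ∑ b ∈ C.biUnion S, blockPlan C S ζ a b * f b = ∑ b ∈ S c₀, ζ c₀ a b * f b := by
  simp only [blockPlan, ite_and, sum_ite_mem_eq_of_pairwiseDisjoint hS hc₀ ha, ite_mul, zero_mul]
  exact sum_biUnion_ite_mem hc₀ _

theorem sum_blockPlan_of_mem_right (hS : (C : Set κ).PairwiseDisjoint S) {c₀ : κ}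
    (hc₀ : c₀ ∈ C) {b : ι} (hb : b ∈ S c₀) (ζ : κ → ι → ι → ℝ) :
    ∑ a ∈ C.biUnion S, blockPlan C S ζ a b = ∑ a ∈ S c₀, ζ c₀ a b := by
  have hswap : ∀ a, blockPlan C S ζ a b
      = ∑ c ∈ C, if b ∈ S c then (if a ∈ S c then ζ c a b else 0) else 0 :=
    fun a => sum_congr rfl fun c _ => by rw [← ite_and]; exact if_congr and_comm rfl rfl
  simp only [hswap, sum_ite_mem_eq_of_pairwiseDisjoint hS hc₀ hb]
  exact sum_biUnion_ite_mem hc₀ _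

theorem isSubCoupling_blockPlan (hS : (C : Set κ).PairwiseDisjoint S) {p q : ι → ℝ}
    {ζ : κ → ι → ι → ℝ} {ℓ φ : κ → ι → ℝ}
    (h : ∀ c ∈ C, IsSubCoupling (S c) p q (ζ c) (ℓ c) (φ c)) :
    IsSubCoupling (C.biUnion S) p q (blockPlan C S ζ) (blockDefect C S ℓ)
      (blockDefect C S φ) where
  nonneg a b := sum_nonneg fun c hc => by
    split_ifs
    exacts [(h c hc).nonneg a b, le_rfl]
  rowDefect_nonneg a := sum_nonneg fun c hc => by
    split_ifs
    exacts [(h c hc).rowDefect_nonneg a, le_rfl]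
  colDefect_nonneg b := sum_nonneg fun c hc => by
    split_ifs
    exacts [(h c hc).colDefect_nonneg b, le_rfl]
  row_sum a ha := by
    obtain ⟨c, hc, hac⟩ := mem_biUnion.mp ha
    have hrow := sum_blockPlan_mul_of_mem_left hS hc hac ζ fun _ => 1
    simp only [mul_one] at hrow
    rw [hrow, blockDefect_of_mem hS hc hac]
    exact (h c hc).row_sum a hac
  col_sum b hb := by
    obtain ⟨c, hc, hbc⟩ := mem_biUnion.mp hb
    rw [sum_blockPlan_of_mem_right hS hc hbc, blockDefect_of_mem hS hc hbc]
    exact (h c hc).col_sum b hbc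

theorem sum_blockPlan_mul (hS : (C : Set κ).PairwiseDisjoint S) (ζ : κ → ι → ι → ℝ)
    (d : ι → ι → ℝ) :
    ∑ a ∈ C.biUnion S, ∑ b ∈ C.biUnion S, blockPlan C S ζ a b * d a b
      = ∑ c ∈ C, ∑ a ∈ S c, ∑ b ∈ S c, ζ c a b * d a b := by
  rw [sum_biUnion hS]
  exact sum_congr rfl fun c hc => sum_congr rfl fun a ha =>
    sum_blockPlan_mul_of_mem_left hS hc ha ζ (d a)

theorem sum_blockDefect_mul (hS : (C : Set κ).PairwiseDisjoint S) (ℓ : κ → ι → ℝ)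
    (f : ι → ℝ) :
    ∑ a ∈ C.biUnion S, blockDefect C S ℓ a * f a = ∑ c ∈ C, ∑ a ∈ S c, ℓ c a * f a := by
  rw [sum_biUnion hS]
  exact sum_congr rfl fun c hc => sum_congr rfl fun a ha => by
    rw [blockDefect_of_mem hS hc ha]

end Blocks

structure IsRootedTree {V : Type*} (r : V) (par : V → V) : Prop where
  par_root : par r = r
  exists_iterate_eq_root : ∀ v, ∃ n : ℕ, par^[n] v = r

def IsDescendant {V : Type*} (par : V → V) (u v : V) : Prop :=
  ∃ n : ℕ, par^[n] u = v

noncomputable def properDescendants {V : Type*} [Fintype V] (par : V → V) (v : V) : Finset V :=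
  univ.filter fun u => u ≠ v ∧ IsDescendant par u v

namespace IsDescendant

variable {V : Type*} {par : V → V} {u v x : V}

theorem refl (par : V → V) (v : V) : IsDescendant par v v := ⟨0, rfl⟩

theorem of_par_eq (h : par u = v) : IsDescendant par u v := ⟨1, h⟩

theorem trans (h₁ : IsDescendant par x u) (h₂ : IsDescendant par u v) : IsDescendant par x v := by
  obtain ⟨n, rfl⟩ := h₁
  obtain ⟨m, rfl⟩ := h₂
  exact ⟨m + n, Function.iterate_add_apply par m n x⟩

theorem total (hu : IsDescendant par x u) (hv : IsDescendant par x v) :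
    IsDescendant par u v ∨ IsDescendant par v u := by
  obtain ⟨n, rfl⟩ := hu
  obtain ⟨m, rfl⟩ := hv
  rcases le_total n m with h | h
  · exact .inl ⟨m - n, by rw [← Function.iterate_add_apply, Nat.sub_add_cancel h]⟩
  · exact .inr ⟨n - m, by rw [← Function.iterate_add_apply, Nat.sub_add_cancel h]⟩

theorem par_of_ne (h : IsDescendant par u v) (huv : u ≠ v) : IsDescendant par (par u) v := by
  obtain ⟨_ | n, rfl⟩ := h
  · exact absurd rfl huv
  · exact ⟨n, (Function.iterate_succ_apply par n u).symm⟩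

end IsDescendant

namespace IsRootedTree

variable {V : Type*} {r : V} {par : V → V}

theorem eq_root_of_iterate_eq (hT : IsRootedTree r par) {v : V} {k : ℕ}
    (h : par^[k + 1] v = v) : v = r := by
  obtain ⟨n, hn⟩ := hT.exists_iterate_eq_root v
  have hperiodic : ∀ m, par^[m * (k + 1)] v = v := fun m =>
    Function.IsPeriodicPt.const_mul (f := par) h m
  rw [← hperiodic n, show n * (k + 1) = n * k + n by ring, Function.iterate_add_apply, hn,
    Function.iterate_fixed hT.par_root]

theorem isDescendant_antisymm (hT : IsRootedTree r par) {u v : V} (huv : IsDescendant par u v)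
    (hvu : IsDescendant par v u) : u = v := by
  obtain ⟨n, hn⟩ := huv
  obtain ⟨_ | m, hm⟩ := hvu
  · exact hm.symm
  · have hcycle : par^[m + n + 1] v = v := by
      rw [show m + n + 1 = n + (m + 1) by omega, Function.iterate_add_apply, hm, hn]
    have hvr := hT.eq_root_of_iterate_eq hcycle
    rw [← hm, hvr, Function.iterate_fixed hT.par_root]

end IsRootedTree

section Tree

variable {V : Type*} [Fintype V] {r : V} {par : V → V}

theorem mem_children {u v : V} : u ∈ children r par v ↔ u ≠ r ∧ par u = v := by
  simp [children]

theorem mem_leavesBelow {l v : V} :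
    l ∈ leavesBelow r par v ↔ l ∈ leaves r par ∧ IsDescendant par l v := by
  simp [leavesBelow, IsDescendant]

theorem leavesBelow_subset_leavesBelow {u v : V} (h : IsDescendant par u v) :
    leavesBelow r par u ⊆ leavesBelow r par v := fun _ hl =>
  mem_leavesBelow.mpr ⟨(mem_leavesBelow.mp hl).1, (mem_leavesBelow.mp hl).2.trans h⟩

theorem mem_insert_properDescendants {u c : V} :
    u ∈ insert c (properDescendants par c) ↔ IsDescendant par u c := by
  by_cases h : u = c
  · simp [h, IsDescendant.refl]
  · simp [properDescendants, h]

theorem leavesBelow_root (hT : IsRootedTree r par) : leavesBelow r par r = leaves r par :=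
  filter_true_of_mem fun l _ => hT.exists_iterate_eq_root l

theorem exists_mem_children_isDescendant (hroot : par r = r) {x v : V}
    (h : IsDescendant par x v) (hxv : x ≠ v) : ∃ c ∈ children r par v, IsDescendant par x c := by
  obtain ⟨n, hn⟩ := h
  induction n generalizing x with
  | zero => exact absurd hn hxv
  | succ n ih =>
    rw [Function.iterate_succ_apply] at hn
    by_cases hpx : par x = v
    · refine ⟨x, mem_children.mpr ⟨fun hxr => hxv ?_, hpx⟩, .refl par x⟩
      rw [← hpx, hxr, hroot]
    · obtain ⟨c, hc, hxc⟩ := ih hpx hn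
      exact ⟨c, hc, (IsDescendant.of_par_eq rfl).trans hxc⟩

theorem IsRootedTree.not_isDescendant_of_mem_children (hT : IsRootedTree r par) {c v : V}
    (hc : c ∈ children r par v) : ¬ IsDescendant par v c := fun hvc => by
  obtain ⟨hcr, hpar⟩ := mem_children.mp hc
  have hcv := hT.isDescendant_antisymm (.of_par_eq hpar) hvc
  exact hcr (hT.eq_root_of_iterate_eq (k := 0) (hpar.trans hcv.symm))

theorem IsRootedTree.eq_of_isDescendant_of_mem_children (hT : IsRootedTree r par)
    {v c c' x : V} (hc : c ∈ children r par v) (hc' : c' ∈ children r par v)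
    (hxc : IsDescendant par x c) (hxc' : IsDescendant par x c') : c = c' := by
  by_contra hne
  rcases hxc.total hxc' with h | h
  · rw [← (mem_children.mp hc).2] at hc'
    exact hT.not_isDescendant_of_mem_children hc' (h.par_of_ne hne)
  · rw [← (mem_children.mp hc').2] at hc
    exact hT.not_isDescendant_of_mem_children hc (h.par_of_ne (Ne.symm hne))

theorem IsRootedTree.pairwiseDisjoint_children (hT : IsRootedTree r par) (v : V)
    {S : V → Finset V} (hS : ∀ c x, x ∈ S c → IsDescendant par x c) :
    (children r par v : Set V).PairwiseDisjoint S := fun c hc c' hc' hne =>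
  Finset.disjoint_left.mpr fun x hxc hxc' =>
    hne (hT.eq_of_isDescendant_of_mem_children hc hc' (hS c x hxc) (hS c' x hxc'))

theorem IsRootedTree.pairwiseDisjoint_leavesBelow (hT : IsRootedTree r par) (v : V) :
    (children r par v : Set V).PairwiseDisjoint (leavesBelow r par) :=
  hT.pairwiseDisjoint_children v fun _ _ hx => (mem_leavesBelow.mp hx).2

theorem IsRootedTree.properDescendants_eq_biUnion (hT : IsRootedTree r par) (v : V) :
    properDescendants par v
      = (children r par v).biUnion fun c => insert c (properDescendants par c) := by
  ext u
  simp only [mem_biUnion, mem_insert_properDescendants]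
  refine ⟨fun hu => ?_, fun ⟨c, hc, huc⟩ => ?_⟩
  · obtain ⟨huv, hdesc⟩ := (mem_filter.mp hu).2
    exact exists_mem_children_isDescendant hT.par_root hdesc huv
  · have hcv : IsDescendant par c v := .of_par_eq (mem_children.mp hc).2
    refine mem_filter.mpr ⟨mem_univ u, fun huv => ?_, huc.trans hcv⟩
    exact hT.not_isDescendant_of_mem_children hc (huv ▸ huc)

theorem IsRootedTree.sum_properDescendants (hT : IsRootedTree r par) (v : V) (g : V → ℝ) :
    ∑ u ∈ properDescendants par v, g u
      = ∑ c ∈ children r par v, (g c + ∑ u ∈ properDescendants par c, g u) := by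
  rw [hT.properDescendants_eq_biUnion v,
    sum_biUnion (hT.pairwiseDisjoint_children v fun _ _ => mem_insert_properDescendants.mp)]
  refine sum_congr rfl fun c _ => sum_insert ?_
  simp [properDescendants]

theorem IsRootedTree.induction (hT : IsRootedTree r par) {P : V → Prop}
    (h : ∀ v, (∀ c ∈ children r par v, P c) → P v) (v : V) : P v := by
  induction hn : (properDescendants par v).card using Nat.strong_induction_on generalizing v
    with | _ n ih =>
  refine h v fun c hc => ih _ (hn ▸ card_lt_card ?_) c rfl
  rw [hT.properDescendants_eq_biUnion v]
  refine ssubset_iff_of_subset (fun u hu => mem_biUnion.mpr ⟨c, hc, mem_insert_of_mem hu⟩)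
    |>.mpr ⟨c, mem_biUnion.mpr ⟨c, hc, mem_insert_self _ _⟩, by simp [properDescendants]⟩

theorem leavesBelow_of_isLeaf (hroot : par r = r) {v : V} (hv : IsLeaf r par v) :
    leavesBelow r par v = {v} := by
  ext l
  rw [mem_leavesBelow, mem_singleton]
  refine ⟨fun ⟨_, hlv⟩ => by_contra fun hne => ?_, ?_⟩
  · obtain ⟨c, hc, -⟩ := exists_mem_children_isDescendant hroot hlv hne
    rw [IsLeaf] at hv
    simp [hv] at hc
  · rintro rfl
    exact ⟨mem_filter.mpr ⟨mem_univ l, hv⟩, .refl par l⟩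

theorem leavesBelow_eq_biUnion (hroot : par r = r) {v : V} (hv : ¬ IsLeaf r par v) :
    leavesBelow r par v = (children r par v).biUnion (leavesBelow r par) := by
  ext l
  simp only [mem_biUnion, mem_leavesBelow]
  refine ⟨fun ⟨hl, hlv⟩ => ?_, fun ⟨c, hc, hl, hlc⟩ => ⟨hl, hlc.trans (.of_par_eq ?_)⟩⟩
  · have hne : l ≠ v := by
      rintro rfl
      exact hv (mem_filter.mp hl).2
    obtain ⟨c, hc, hlc⟩ := exists_mem_children_isDescendant hroot hlv hne
    exact ⟨c, hc, hl, hlc⟩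
  · exact (mem_children.mp hc).2

theorem IsRootedTree.sum_leavesBelow (hT : IsRootedTree r par) {z : V → ℝ}
    (hz : ∀ u, ¬ IsLeaf r par u → z u = ∑ v ∈ children r par u, z v) (v : V) :
    ∑ l ∈ leavesBelow r par v, z l = z v := by
  induction v using hT.induction with | h v ih =>
  by_cases hv : IsLeaf r par v
  · rw [leavesBelow_of_isLeaf hT.par_root hv, sum_singleton]
  · rw [hz v hv, leavesBelow_eq_biUnion hT.par_root hv,
      sum_biUnion (hT.pairwiseDisjoint_leavesBelow v)]
    exact sum_congr rfl ih

end Tree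

/-- The weight of the path from `a` up to `v`, the vertex `v` itself excluded. -/
noncomputable def pathWeight {V : Type*} [Fintype V] (r : V) (par : V → V) (w : V → ℝ)
    (v a : V) : ℝ :=
  ∑ u ∈ properDescendants par v, w u * if a ∈ leavesBelow r par u then 1 else 0

section PathWeight

variable {V : Type*} [Fintype V] {r : V} {par : V → V} {w : V → ℝ}

theorem pathWeight_eq_zero_of_notMem {v a : V} (ha : a ∉ leavesBelow r par v) :
    pathWeight r par w v a = 0 :=
  sum_eq_zero fun u hu => by
    rw [if_neg fun hau => ha (leavesBelow_subset_leavesBelow (mem_filter.mp hu).2.2 hau),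
      mul_zero]

theorem IsRootedTree.pathWeight_of_mem_children (hT : IsRootedTree r par) {v c a : V}
    (hc : c ∈ children r par v) (ha : a ∈ leavesBelow r par c) :
    pathWeight r par w v a = w c + pathWeight r par w c a := by
  rw [pathWeight, hT.sum_properDescendants, sum_eq_single_of_mem c hc fun c' hc' hne => ?_,
    if_pos ha, mul_one, pathWeight]
  have ha' : a ∉ leavesBelow r par c' :=
    Finset.disjoint_left.mp (hT.pairwiseDisjoint_leavesBelow v hc hc' hne.symm) ha
  rw [if_neg ha', mul_zero, zero_add]
  exact pathWeight_eq_zero_of_notMem ha'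

theorem mem_leavesBelow_of_notMem_properDescendants {v u a b : V}
    (ha : a ∈ leavesBelow r par v) (hb : b ∈ leavesBelow r par v)
    (hu : u ∉ properDescendants par v) (hau : a ∈ leavesBelow r par u) :
    b ∈ leavesBelow r par u := by
  rcases (mem_leavesBelow.mp hau).2.total (mem_leavesBelow.mp ha).2 with huv | hvu
  · have : u = v := by_contra fun hne => hu (mem_filter.mpr ⟨mem_univ u, hne, huv⟩)
    exact this ▸ hb
  · exact leavesBelow_subset_leavesBelow hvu hb

theorem treeDist_le_pathWeight_add (hw : ∀ v, 0 ≤ w v) {v a b : V}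
    (ha : a ∈ leavesBelow r par v) (hb : b ∈ leavesBelow r par v) :
    treeDist r par w a b ≤ pathWeight r par w v a + pathWeight r par w v b := by
  calc treeDist r par w a b
      ≤ ∑ u, if u ∈ properDescendants par v then
          (w u * (if a ∈ leavesBelow r par u then 1 else 0)
            + w u * (if b ∈ leavesBelow r par u then 1 else 0)) else 0 := by
        refine sum_le_sum fun u _ => ?_
        by_cases hu : u ∈ properDescendants par v
        · rw [if_pos hu]
          split_ifs <;> simp [hw u]
        · have hiff : a ∈ leavesBelow r par u ↔ b ∈ leavesBelow r par u :=
            ⟨mem_leavesBelow_of_notMem_properDescendants ha hb hu,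
              mem_leavesBelow_of_notMem_properDescendants hb ha hu⟩
          simp [hu, hiff]
    _ = pathWeight r par w v a + pathWeight r par w v b := by
        rw [sum_ite_mem, univ_inter, sum_add_distrib, pathWeight, pathWeight]

end PathWeight

/-- The induction invariant at `v`: unmatched mass is charged its distance `pathWeight v` to
`v`, and is no more than the imbalance `|z v - z' v|` forces. -/
def HasSubtreeCoupling {V : Type*} [Fintype V] (r : V) (par : V → V) (w z z' : V → ℝ) (v : V) :
    Prop :=
  ∃ (ζ : V → V → ℝ) (ℓ φ : V → ℝ), IsSubCoupling (leavesBelow r par v) z z' ζ ℓ φ ∧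
    ∑ a ∈ leavesBelow r par v, ℓ a + ∑ b ∈ leavesBelow r par v, φ b = |z v - z' v| ∧
    ∑ a ∈ leavesBelow r par v, ∑ b ∈ leavesBelow r par v, ζ a b * treeDist r par w a b
        + ∑ a ∈ leavesBelow r par v, ℓ a * pathWeight r par w v a
        + ∑ b ∈ leavesBelow r par v, φ b * pathWeight r par w v b
      ≤ ∑ u ∈ properDescendants par v, w u * |z u - z' u|

section Coupling

variable {V : Type*} [Fintype V] {r : V} {par : V → V} {w z z' : V → ℝ}

theorem IsRootedTree.hasSubtreeCoupling_of_isLeaf (hT : IsRootedTree r par)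
    (hz0 : ∀ v, 0 ≤ z v) (hz0' : ∀ v, 0 ≤ z' v) {v : V} (hv : IsLeaf r par v) :
    HasSubtreeCoupling r par w z z' v := by
  have hdesc : properDescendants par v = ∅ := by
    rw [hT.properDescendants_eq_biUnion, show children r par v = ∅ from hv, biUnion_empty]
  refine ⟨fun _ _ => min (z v) (z' v), fun _ => z v - min (z v) (z' v),
    fun _ => z' v - min (z v) (z' v), ⟨fun _ _ => le_min (hz0 v) (hz0' v),
      fun _ => sub_nonneg.mpr (min_le_left _ _), fun _ => sub_nonneg.mpr (min_le_right _ _),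
      ?_, ?_⟩, ?_, ?_⟩ <;>
    simp only [leavesBelow_of_isLeaf hT.par_root hv, mem_singleton, sum_singleton]
  · rintro a rfl; ring
  · rintro b rfl; ring
  · rw [← max_sub_min_eq_abs']
    linarith [min_add_max (z v) (z' v)]
  · simp [hdesc, pathWeight, treeDist]

theorem IsRootedTree.sum_blockDefect_mul_pathWeight (hT : IsRootedTree r par) {v : V}
    (hv : ¬ IsLeaf r par v) (m : V → V → ℝ) :
    ∑ a ∈ leavesBelow r par v,
        blockDefect (children r par v) (leavesBelow r par) m a * pathWeight r par w v a
      = ∑ c ∈ children r par v, (w c * ∑ a ∈ leavesBelow r par c, m c a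
          + ∑ a ∈ leavesBelow r par c, m c a * pathWeight r par w c a) := by
  rw [leavesBelow_eq_biUnion hT.par_root hv,
    sum_blockDefect_mul (hT.pairwiseDisjoint_leavesBelow v)]
  refine sum_congr rfl fun c hc => ?_
  rw [mul_sum, ← sum_add_distrib]
  exact sum_congr rfl fun a ha => by rw [hT.pathWeight_of_mem_children hc ha]; ring

theorem IsRootedTree.hasSubtreeCoupling_of_children (hT : IsRootedTree r par)
    (hw : ∀ v, 0 ≤ w v)
    (hz : ∀ u, ¬ IsLeaf r par u → z u = ∑ v ∈ children r par u, z v)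
    (hz' : ∀ u, ¬ IsLeaf r par u → z' u = ∑ v ∈ children r par u, z' v)
    {v : V} (hv : ¬ IsLeaf r par v)
    (ih : ∀ c ∈ children r par v, HasSubtreeCoupling r par w z z' c) :
    HasSubtreeCoupling r par w z z' v := by
  choose! ζ ℓ φ hsub habs hcost using ih
  have hdisj := hT.pairwiseDisjoint_leavesBelow v
  have hL : leavesBelow r par v = (children r par v).biUnion (leavesBelow r par) :=
    leavesBelow_eq_biUnion hT.par_root hv
  have hglue := isSubCoupling_blockPlan hdisj hsub
  rw [← hL] at hglue
  obtain ⟨γ, ℓ', φ', hγ, habsγ⟩ := exists_isSubCoupling_sum_defect_eq_abs (leavesBelow r par v)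
    hglue.rowDefect_nonneg hglue.colDefect_nonneg
  refine ⟨blockPlan (children r par v) (leavesBelow r par) ζ + γ, ℓ', φ', hglue.add hγ, ?_, ?_⟩
  · rw [habsγ, hglue.sum_rowDefect_sub_sum_colDefect, hT.sum_leavesBelow hz,
      hT.sum_leavesBelow hz']
  have hγcost := hγ.cost_add_defect_le (d := treeDist r par w) (f := pathWeight r par w v)
    fun a ha b hb => treeDist_le_pathWeight_add hw ha hb
  have hplan : ∑ a ∈ leavesBelow r par v, ∑ b ∈ leavesBelow r par v,
      (blockPlan (children r par v) (leavesBelow r par) ζ + γ) a b * treeDist r par w a b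
        = ∑ c ∈ children r par v, ∑ a ∈ leavesBelow r par c, ∑ b ∈ leavesBelow r par c,
            ζ c a b * treeDist r par w a b
          + ∑ a ∈ leavesBelow r par v, ∑ b ∈ leavesBelow r par v, γ a b * treeDist r par w a b := by
    simp only [Pi.add_apply, add_mul, sum_add_distrib]
    rw [hL, sum_blockPlan_mul hdisj]
  -- The children's budgets pay for everything up to `c`; crossing the edge from `c` to `v`
  -- costs `w c` per unit of `c`'s unmatched mass, which is `|z c - z' c|`.
  have hchildren : ∀ c ∈ children r par v, ∑ a ∈ leavesBelow r par c, ∑ b ∈ leavesBelow r par c,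
      ζ c a b * treeDist r par w a b
        + (w c * ∑ a ∈ leavesBelow r par c, ℓ c a
          + ∑ a ∈ leavesBelow r par c, ℓ c a * pathWeight r par w c a)
        + (w c * ∑ b ∈ leavesBelow r par c, φ c b
          + ∑ b ∈ leavesBelow r par c, φ c b * pathWeight r par w c b)
      ≤ w c * |z c - z' c| + ∑ u ∈ properDescendants par c, w u * |z u - z' u| := fun c hc => by
    rw [← habs c hc]
    linarith [hcost c hc]
  rw [hT.sum_properDescendants, hplan]
  have htotal := sum_le_sum hchildren
  have hℓ := hT.sum_blockDefect_mul_pathWeight (w := w) hv ℓ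
  have hφ := hT.sum_blockDefect_mul_pathWeight (w := w) hv φ
  simp only [sum_add_distrib] at htotal hℓ hφ ⊢
  linarith

theorem IsRootedTree.hasSubtreeCoupling (hT : IsRootedTree r par) (hw : ∀ v, 0 ≤ w v)
    (hz0 : ∀ v, 0 ≤ z v) (hz0' : ∀ v, 0 ≤ z' v)
    (hz : ∀ u, ¬ IsLeaf r par u → z u = ∑ v ∈ children r par u, z v)
    (hz' : ∀ u, ¬ IsLeaf r par u → z' u = ∑ v ∈ children r par u, z' v) (v : V) :
    HasSubtreeCoupling r par w z z' v := by
  induction v using hT.induction with | h v ih =>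
  by_cases hv : IsLeaf r par v
  · exact hT.hasSubtreeCoupling_of_isLeaf hz0 hz0' hv
  · exact hT.hasSubtreeCoupling_of_children hw hz hz' hv ih

theorem IsRootedTree.sum_leaves_mul_ite_mem (hT : IsRootedTree r par)
    (hz : ∀ u, ¬ IsLeaf r par u → z u = ∑ v ∈ children r par u, z v) (v : V) :
    ∑ a ∈ leaves r par, z a * (if a ∈ leavesBelow r par v then 1 else 0) = z v := by
  simp only [mul_ite, mul_one, mul_zero]
  have hsub : leavesBelow r par v ⊆ leaves r par := filter_subset _ _
  rw [sum_ite_mem, inter_eq_right.mpr hsub, hT.sum_leavesBelow hz]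

theorem IsRootedTree.sum_mul_abs_sub_le_cost (hT : IsRootedTree r par) (hw : ∀ v, 0 ≤ w v)
    (hz : ∀ u, ¬ IsLeaf r par u → z u = ∑ v ∈ children r par u, z v)
    (hz' : ∀ u, ¬ IsLeaf r par u → z' u = ∑ v ∈ children r par u, z' v) {ζ : V → V → ℝ}
    (hζ : ∀ a ∈ leaves r par, ∀ b ∈ leaves r par, 0 ≤ ζ a b)
    (hrow : ∀ a ∈ leaves r par, ∑ b ∈ leaves r par, ζ a b = z a)
    (hcol : ∀ b ∈ leaves r par, ∑ a ∈ leaves r par, ζ a b = z' b) :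
    ∑ v, w v * |z v - z' v|
      ≤ ∑ a ∈ leaves r par, ∑ b ∈ leaves r par, ζ a b * treeDist r par w a b := by
  set ind : V → V → ℝ := fun v a => if a ∈ leavesBelow r par v then 1 else 0
  have hdiff : ∀ v, z v - z' v
      = ∑ a ∈ leaves r par, ∑ b ∈ leaves r par, ζ a b * (ind v a - ind v b) := fun v => by
    have hfirst : ∑ a ∈ leaves r par, ∑ b ∈ leaves r par, ζ a b * ind v a = z v := by
      rw [← hT.sum_leaves_mul_ite_mem hz v]
      exact sum_congr rfl fun a ha => by rw [← sum_mul, hrow a ha]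
    have hsecond : ∑ a ∈ leaves r par, ∑ b ∈ leaves r par, ζ a b * ind v b = z' v := by
      rw [sum_comm, ← hT.sum_leaves_mul_ite_mem hz' v]
      exact sum_congr rfl fun b hb => by rw [← sum_mul, hcol b hb]
    simp only [mul_sub, sum_sub_distrib, hfirst, hsecond]
  calc ∑ v, w v * |z v - z' v|
      ≤ ∑ v, w v * ∑ a ∈ leaves r par, ∑ b ∈ leaves r par, ζ a b * |ind v a - ind v b| := by
        refine sum_le_sum fun v _ => mul_le_mul_of_nonneg_left ?_ (hw v)
        rw [hdiff v]
        refine (abs_sum_le_sum_abs _ _).trans (sum_le_sum fun a ha => ?_)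
        refine (abs_sum_le_sum_abs _ _).trans (le_of_eq (sum_congr rfl fun b hb => ?_))
        rw [abs_mul, abs_of_nonneg (hζ a ha b hb)]
    _ = ∑ a ∈ leaves r par, ∑ b ∈ leaves r par, ζ a b * treeDist r par w a b := by
        simp only [treeDist, mul_sum]
        rw [sum_comm]
        refine sum_congr rfl fun a _ => ?_
        rw [sum_comm]
        exact sum_congr rfl fun b _ => sum_congr rfl fun v _ => by ring

theorem IsRootedTree.exists_coupling_cost_le (hT : IsRootedTree r par) (hw : ∀ v, 0 ≤ w v)
    (hz0 : ∀ v, 0 ≤ z v) (hz0' : ∀ v, 0 ≤ z' v)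
    (hz : ∀ u, ¬ IsLeaf r par u → z u = ∑ v ∈ children r par u, z v)
    (hz' : ∀ u, ¬ IsLeaf r par u → z' u = ∑ v ∈ children r par u, z' v) (hr : z r = z' r) :
    ∃ ζ : V → V → ℝ, (∀ a ∈ leaves r par, ∀ b ∈ leaves r par, 0 ≤ ζ a b) ∧
      (∀ a ∈ leaves r par, ∑ b ∈ leaves r par, ζ a b = z a) ∧
      (∀ b ∈ leaves r par, ∑ a ∈ leaves r par, ζ a b = z' b) ∧
      ∑ a ∈ leaves r par, ∑ b ∈ leaves r par, ζ a b * treeDist r par w a b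
        ≤ ∑ v, w v * |z v - z' v| := by
  obtain ⟨ζ, ℓ, φ, hsub, hdefect, hcost⟩ := hT.hasSubtreeCoupling hw hz0 hz0' hz hz' r
  rw [leavesBelow_root hT] at hsub hdefect hcost
  rw [hr, sub_self, abs_zero] at hdefect
  have hℓ0 : 0 ≤ ∑ a ∈ leaves r par, ℓ a := sum_nonneg fun a _ => hsub.rowDefect_nonneg a
  have hφ0 : 0 ≤ ∑ b ∈ leaves r par, φ b := sum_nonneg fun b _ => hsub.colDefect_nonneg b
  have hℓ := (sum_eq_zero_iff_of_nonneg fun a _ => hsub.rowDefect_nonneg a).mp (by linarith)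
  have hφ := (sum_eq_zero_iff_of_nonneg fun b _ => hsub.colDefect_nonneg b).mp (by linarith)
  refine ⟨ζ, fun a _ b _ => hsub.nonneg a b, fun a ha => ?_, fun b hb => ?_, ?_⟩
  · simpa [hℓ a ha] using hsub.row_sum a ha
  · simpa [hφ b hb] using hsub.col_sum b hb
  · have hbudget : ∑ u ∈ properDescendants par r, w u * |z u - z' u| ≤ ∑ v, w v * |z v - z' v| :=
      sum_le_sum_of_subset_of_nonneg (subset_univ _) fun u _ _ => mul_nonneg (hw u) (abs_nonneg _)
    have hℓcost : ∑ a ∈ leaves r par, ℓ a * pathWeight r par w r a = 0 :=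
      sum_eq_zero fun a ha => by rw [hℓ a ha, zero_mul]
    have hφcost : ∑ b ∈ leaves r par, φ b * pathWeight r par w r b = 0 :=
      sum_eq_zero fun b hb => by rw [hφ b hb, zero_mul]
    linarith

end Coupling

/-- Existence of an optimal tree coupling: for `z, z′ ∈ K_T`, the weighted ℓ1 distance
`Σ_v w_v |z_v − z′_v|` is the least transport cost over all couplings of the induced leaf
distributions; in particular some coupling attains it and it equals the infimum (the
Wasserstein-1 distance in the tree metric). -/
theorem optimal_tree_coupling {V : Type*} [Fintype V]
    (r : V) (par : V → V)
    (hroot : par r = r)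
    (hreach : ∀ v : V, ∃ n : ℕ, par^[n] v = r)
    (w : V → ℝ) (hw : ∀ v, 0 ≤ w v)
    (z z' : V → ℝ)
    (hz : (∀ v, 0 ≤ z v) ∧ z r = 1 ∧
      ∀ u, ¬ IsLeaf r par u → z u = ∑ v ∈ children r par u, z v)
    (hz' : (∀ v, 0 ≤ z' v) ∧ z' r = 1 ∧
      ∀ u, ¬ IsLeaf r par u → z' u = ∑ v ∈ children r par u, z' v) :
    IsLeast {c : ℝ | ∃ ζ : V → V → ℝ,
        (∀ a ∈ leaves r par, ∀ b ∈ leaves r par, 0 ≤ ζ a b) ∧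
        (∀ a ∈ leaves r par, ∑ b ∈ leaves r par, ζ a b = z a) ∧
        (∀ b ∈ leaves r par, ∑ a ∈ leaves r par, ζ a b = z' b) ∧
        c = ∑ a ∈ leaves r par, ∑ b ∈ leaves r par, ζ a b * treeDist r par w a b}
      (∑ v : V, w v * |z v - z' v|) := by
  obtain ⟨hz0, hzr, hz⟩ := hz
  obtain ⟨hz0', hzr', hz'⟩ := hz'
  have hT : IsRootedTree r par := ⟨hroot, hreach⟩
  obtain ⟨ζ, hζ, hrow, hcol, hcost⟩ :=
    hT.exists_coupling_cost_le hw hz0 hz0' hz hz' (hzr.trans hzr'.symm)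
  refine ⟨⟨ζ, hζ, hrow, hcol,
    le_antisymm (hT.sum_mul_abs_sub_le_cost hw hz hz' hζ hrow hcol) hcost⟩, ?_⟩
  rintro c ⟨ζ', hζ', hrow', hcol', rfl⟩
  exact hT.sum_mul_abs_sub_le_cost hw hz hz' hζ' hrow' hcol'
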